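/- Equivalence of the standard and context-dependent semantics for star-free EPDL: for any uncertainty map M and action sequence σ with U|^σ ≠ ∅, and every s ∈ U|^σ: (i) (M|^σ, s) ⟦π⟧ (M', s') if and only if there exists a computation sequence ω ∈ L(π) such that M' = M|^{σ r(ω)} and s →_{ω_σ} s'; and (ii) M|^σ, s ⊨ φ if and only if M, s ⊩_σ φ, for all star-free EPDL formulas φ and programs π. -/

import Mathlib

/-!
Updating along a concatenation is iterated updating, so running a computation sequence `ω` from
context `σ` leaves the uncertainty set `U|^{σ r(ω)}`; and `s →_{(uv)_σ} s'` factors through a state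
`t` with `s →_{u_σ} t` and `t →_{v_{σ r(u)}} s'`. With these two facts, (i) and (ii) are proved
together by mutual structural induction on programs and formulas, for all contexts `σ` and states
`s` at once: a test in (i) appeals to (ii) for a subformula, a box in (ii) to (i) for a subprogram.
-/

mutual
/-- Formulas of the star-free fragment EPDL⁻. -/
inductive SFForm (P A : Type) : Type
  | top : SFForm P A
  | atom : P → SFForm P A
  | neg : SFForm P A → SFForm P A
  | and : SFForm P A → SFForm P A → SFForm P A
  | box : SFProg P A → SFForm P A → SFForm P A
  | know : SFForm P A → SFForm P A
/-- Star-free programs. -/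
inductive SFProg (P A : Type) : Type
  | act : A → SFProg P A
  | test : SFForm P A → SFProg P A
  | seq : SFProg P A → SFProg P A → SFProg P A
  | choice : SFProg P A → SFProg P A → SFProg P A
end

/-- A step of a computation sequence: an action or a test. -/
inductive SFStep (P A : Type) : Type
  | act : A → SFStep P A
  | test : SFForm P A → SFStep P A

mutual
def sizeF {P A : Type} : SFForm P A → ℕ
  | .top => 1
  | .atom _ => 1
  | .neg φ => sizeF φ + 1
  | .and φ ψ => sizeF φ + sizeF ψ + 1
  | .box π φ => sizeP π + sizeF φ + 1
  | .know φ => sizeF φ + 1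
def sizeP {P A : Type} : SFProg P A → ℕ
  | .act _ => 1
  | .test φ => sizeF φ + 1
  | .seq π π' => sizeP π + sizeP π' + 1
  | .choice π π' => sizeP π + sizeP π' + 1
end

def sizeStep {P A : Type} : SFStep P A → ℕ
  | .act _ => 1
  | .test φ => sizeF φ + 1

def sizeW {P A : Type} (ω : List (SFStep P A)) : ℕ := (ω.map sizeStep).sum

/-- L(π): the set of computation sequences of π. -/
def Lang {P A : Type} : SFProg P A → Set (List (SFStep P A))
  | .act a => {[SFStep.act a]}
  | .test φ => {[SFStep.test φ]}
  | .seq π π' => {ω | ∃ u ∈ Lang π, ∃ v ∈ Lang π', ω = u ++ v}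
  | .choice π π' => Lang π ∪ Lang π'

/-- r(ω): the sequence of actions obtained by deleting all tests from ω. -/
def rActs {P A : Type} (ω : List (SFStep P A)) : List A :=
  ω.filterMap fun st => match st with | .act a => some a | .test _ => none

theorem lang_size {P A : Type} : ∀ (π : SFProg P A) (ω : List (SFStep P A)),
    ω ∈ Lang π → sizeW ω ≤ sizeP π
  | .act a, ω, hω => by
      simp only [Lang, Set.mem_singleton_iff] at hω
      subst hω
      simp [sizeW, sizeStep, sizeP]
  | .test φ, ω, hω => by
      simp only [Lang, Set.mem_singleton_iff] at hω
      subst hω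
      simp [sizeW, sizeStep, sizeP]
  | .seq π π', ω, hω => by
      simp only [Lang, Set.mem_setOf_eq] at hω
      obtain ⟨u, hu, v, hv, rfl⟩ := hω
      have h1 := lang_size π u hu
      have h2 := lang_size π' v hv
      simp only [sizeW, List.map_append, List.sum_append] at *
      simp only [sizeP]
      omega
  | .choice π π', ω, hω => by
      simp only [Lang, Set.mem_union] at hω
      rcases hω with h | h
      · have := lang_size π ω h; simp only [sizeP]; omega
      · have := lang_size π' ω h; simp only [sizeP]; omega

theorem sizeF_pos {P A : Type} (φ : SFForm P A) : 1 ≤ sizeF φ := by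
  cases φ <;> simp [sizeF]

theorem sizeP_pos {P A : Type} (π : SFProg P A) : 1 ≤ sizeP π := by
  cases π <;> simp [sizeP]

/-- A Kripke model with labelled relations. -/
structure Kripke (P A : Type) where
  S : Type
  R : A → S → S → Prop
  V : S → P → Prop

namespace Kripke
variable {P A : Type}
/-- U|^a -/
def img (N : Kripke P A) (a : A) (U : Set N.S) : Set N.S := {t | ∃ u ∈ U, N.R a u t}
/-- Iterated update U|^σ along a sequence of actions. -/
def updU (N : Kripke P A) : Set N.S → List A → Set N.S
  | U, [] => U
  | U, a :: σ => N.updU (N.img a U) σ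
end Kripke

mutual
/-- Standard semantics of EPDL⁻ at a pointed uncertainty map (over a fixed
Kripke model `N`, given by an uncertainty set and a state). -/
def sfSat {P A : Type} (N : Kripke P A) : Set N.S → N.S → SFForm P A → Prop
  | _, _, .top => True
  | _, s, .atom p => N.V s p
  | U, s, .neg φ => ¬ sfSat N U s φ
  | U, s, .and φ ψ => sfSat N U s φ ∧ sfSat N U s ψ
  | U, s, .box π φ => ∀ c : Set N.S × N.S, sfRel N π (U, s) c → sfSat N c.1 c.2 φ
  | U, _, .know φ => ∀ u ∈ U, sfSat N U u φ
/-- The relation ⟦π⟧ between pointed uncertainty maps. -/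
def sfRel {P A : Type} (N : Kripke P A) : SFProg P A → Set N.S × N.S → Set N.S × N.S → Prop
  | .act a, c, c' => c'.1 = N.img a c.1 ∧ N.R a c.2 c'.2
  | .test ψ, c, c' => c' = c ∧ sfSat N c.1 c.2 ψ
  | .seq π₁ π₂, c, c' => ∃ d, sfRel N π₁ c d ∧ sfRel N π₂ d c'
  | .choice π₁ π₂, c, c' => sfRel N π₁ c c' ∨ sfRel N π₂ c c'
end

mutual
/-- Context-dependent semantics M,s ⊩_σ φ: `U` is the initial uncertainty set of
the uncertainty map M, `σ` records the actions executed so far. -/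
def cSat {P A : Type} (N : Kripke P A) (U : Set N.S) : List A → N.S → SFForm P A → Prop
  | _, _, .top => True
  | _, s, .atom p => N.V s p
  | σ, s, .neg φ => ¬ cSat N U σ s φ
  | σ, s, .and φ ψ => cSat N U σ s φ ∧ cSat N U σ s ψ
  | σ, _, .know φ => ∀ v ∈ N.updU U σ, cSat N U σ v φ
  | σ, s, .box π φ => ∀ ω : List (SFStep P A), ω ∈ Lang π →
      ∀ t : N.S, cRel N U ω σ s t → cSat N U (σ ++ rActs ω) t φ
termination_by σ s φ => sizeF φ
decreasing_by
  · simp only [sizeF]; omega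
  · simp only [sizeF]; omega
  · simp only [sizeF]; omega
  · simp only [sizeF]; omega
  · have h1 := lang_size π ω (by assumption)
    have h2 := sizeF_pos φ
    simp only [sizeF]; omega
  · have h2 := sizeP_pos π
    simp only [sizeF]; omega

/-- The context-dependent relation s →_{ω_σ} t. -/
def cRel {P A : Type} (N : Kripke P A) (U : Set N.S) : List (SFStep P A) → List A → N.S → N.S → Prop
  | [], _, s, t => s = t
  | .act a :: ω, σ, s, t => ∃ s', N.R a s s' ∧ cRel N U ω (σ ++ [a]) s' t
  | .test φ :: ω, σ, s, t => cSat N U σ s φ ∧ cRel N U ω σ s t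
termination_by ω σ s t => sizeW ω
decreasing_by
  · simp only [sizeW, sizeStep, List.map_cons, List.sum_cons]; omega
  · simp only [sizeW, sizeStep, List.map_cons, List.sum_cons]; omega
  · simp only [sizeW, sizeStep, List.map_cons, List.sum_cons]; omega
end

theorem Kripke.updU_append {P A : Type} (N : Kripke P A) (U : Set N.S) (σ τ : List A) :
    N.updU U (σ ++ τ) = N.updU (N.updU U σ) τ := by
  induction σ generalizing U with
  | nil => rfl
  | cons a σ ih => exact ih _

section
variable {P A : Type}

@[simp] theorem rActs_nil : rActs ([] : List (SFStep P A)) = [] := rfl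

@[simp] theorem rActs_cons_act (a : A) (ω : List (SFStep P A)) :
    rActs (.act a :: ω) = a :: rActs ω := rfl

@[simp] theorem rActs_cons_test (φ : SFForm P A) (ω : List (SFStep P A)) :
    rActs (.test φ :: ω) = rActs ω := rfl

@[simp] theorem rActs_append (u v : List (SFStep P A)) :
    rActs (u ++ v) = rActs u ++ rActs v :=
  List.filterMap_append

variable (N : Kripke P A) (U : Set N.S)

theorem cRel_append (u v : List (SFStep P A)) (σ : List A) (s s' : N.S) :
    cRel N U (u ++ v) σ s s' ↔ ∃ t, cRel N U u σ s t ∧ cRel N U v (σ ++ rActs u) t s' := by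
  induction u generalizing σ s with
  | nil => simp [cRel]
  | cons st u ih =>
    cases st with
    | act a => simp only [List.cons_append, cRel, ih, rActs_cons_act, List.append_assoc]; grind
    | test φ => simp only [List.cons_append, cRel, ih, rActs_cons_test]; grind

mutual
theorem sfRel_updU_iff : ∀ (π : SFProg P A) (σ : List A) (s : N.S) (U' : Set N.S) (s' : N.S),
    sfRel N π (N.updU U σ, s) (U', s') ↔
      ∃ ω ∈ Lang π, U' = N.updU U (σ ++ rActs ω) ∧ cRel N U ω σ s s'
  | .act a, σ, s, U', s' => by
    simp [sfRel, Lang, cRel, Kripke.updU_append, Kripke.updU, Kripke.img]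
  | .test ψ, σ, s, U', s' => by
    simp only [sfRel, Lang, Set.mem_singleton_iff, exists_eq_left, Prod.mk.injEq, cRel,
      rActs_cons_test, rActs_nil, List.append_nil, sfSat_updU_iff ψ]
    grind
  | .seq π₁ π₂, σ, s, U', s' => by
    simp only [sfRel, Lang, Set.mem_ofPred_eq]
    constructor
    · rintro ⟨⟨V, t⟩, h₁, h₂⟩
      obtain ⟨u, hu, rfl, hut⟩ := (sfRel_updU_iff π₁ σ s V t).mp h₁
      obtain ⟨v, hv, rfl, hvt⟩ := (sfRel_updU_iff π₂ (σ ++ rActs u) t U' s').mp h₂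
      exact ⟨u ++ v, ⟨u, hu, v, hv, rfl⟩, by simp, (cRel_append N U u v σ s s').mpr ⟨t, hut, hvt⟩⟩
    · rintro ⟨_, ⟨u, hu, v, hv, rfl⟩, rfl, huv⟩
      obtain ⟨t, hut, hvt⟩ := (cRel_append N U u v σ s s').mp huv
      refine ⟨(N.updU U (σ ++ rActs u), t), (sfRel_updU_iff π₁ σ s _ t).mpr ⟨u, hu, rfl, hut⟩, ?_⟩
      exact (sfRel_updU_iff π₂ _ t _ s').mpr ⟨v, hv, by simp, hvt⟩
  | .choice π₁ π₂, σ, s, U', s' => by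
    simp only [sfRel, Lang, Set.mem_union, sfRel_updU_iff π₁, sfRel_updU_iff π₂, or_and_right,
      exists_or]

theorem sfSat_updU_iff : ∀ (φ : SFForm P A) (σ : List A) (s : N.S),
    sfSat N (N.updU U σ) s φ ↔ cSat N U σ s φ
  | .top, σ, s => by simp [sfSat, cSat]
  | .atom p, σ, s => by simp [sfSat, cSat]
  | .neg φ, σ, s => by simp only [sfSat, cSat, sfSat_updU_iff φ]
  | .and φ ψ, σ, s => by simp only [sfSat, cSat, sfSat_updU_iff φ, sfSat_updU_iff ψ]
  | .know φ, σ, s => by simp only [sfSat, cSat, sfSat_updU_iff φ]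
  | .box π φ, σ, s => by
    simp only [sfSat, cSat, Prod.forall, sfRel_updU_iff π]
    constructor
    · intro h ω hω t hωt
      exact (sfSat_updU_iff φ _ t).mp (h _ t ⟨ω, hω, rfl, hωt⟩)
    · rintro h _ t ⟨ω, hω, rfl, hωt⟩
      exact (sfSat_updU_iff φ _ t).mpr (h ω hω t hωt)
end

end

/-- Equivalence of the standard and context-dependent semantics for
star-free EPDL: for any uncertainty map (N with uncertainty set U) and action
sequence σ with U|^σ ≠ ∅, and every s ∈ U|^σ:
(i) (M|^σ, s) ⟦π⟧ (M', s') iff there is a computation sequence ω ∈ L(π) with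
    M' = M|^{σ r(ω)} and s →_{ω_σ} s'; and
(ii) M|^σ, s ⊨ φ iff M, s ⊩_σ φ. -/
theorem standard_eq_context_semantics {P A : Type} [Countable P] [Countable A]
    (N : Kripke P A) (U : Set N.S) (σ : List A)
    (hne : (N.updU U σ).Nonempty) (s : N.S) (hs : s ∈ N.updU U σ) :
    (∀ (π : SFProg P A) (U' : Set N.S) (s' : N.S),
        sfRel N π (N.updU U σ, s) (U', s') ↔
          ∃ ω ∈ Lang π, U' = N.updU U (σ ++ rActs ω) ∧ cRel N U ω σ s s') ∧
    (∀ φ : SFForm P A, sfSat N (N.updU U σ) s φ ↔ cSat N U σ s φ) :=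
  ⟨fun π => sfRel_updU_iff N U π σ s, fun φ => sfSat_updU_iff N U φ σ s⟩
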